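/- Let x_f : Ω → ℝ^M and z : Ω → ℝ^I be square-integrable random vectors with covariance matrices C_{x_f z}, C_{x_f}, and C_z, and assume C_z is symmetric positive definite. Fix ŷ ∈ ℝ^I, set K := C_{x_f z} C_z^{-1}, and define x_a(ω) := x_f(ω) + K(ŷ − z(ω)). Then C_{x_f} − C_{x_a} = C_{x_f z} C_z^{-1} C_{x_f z}ᵀ is a positive semidefinite matrix; in particular C_{x_a} ≤ C_{x_f} in the Loewner ordering of symmetric matrices. -/

import Mathlib

open MeasureTheory Matrix

/-- The covariance matrix of two square-integrable random vectors:
`(C_{xz})_{m i} = E[(x_m − E[x_m])(z_i − E[z_i])]`. -/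
noncomputable def covMatrix {Ω : Type*} [MeasurableSpace Ω] (ℙ : Measure Ω)
    {M I : ℕ} (x : Ω → Fin M → ℝ) (z : Ω → Fin I → ℝ) : Matrix (Fin M) (Fin I) ℝ :=
  Matrix.of fun m i =>
    ∫ ω, (x ω m - ∫ ω', x ω' m ∂ℙ) * (z ω i - ∫ ω', z ω' i ∂ℙ) ∂ℙ

/-! Covariance is bilinear and blind to constant shifts, so `x_a = (x_f - K z) + K ŷ` has
covariance `C_{x_f} - C_{x_f z} Kᵀ - K C_{x_f z}ᵀ + K C_z Kᵀ`. For the gain `K = C_{x_f z} C_z⁻¹`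
all three correction terms equal `C_{x_f z} C_z⁻¹ C_{x_f z}ᵀ`, leaving the Schur complement of
`C_z`; the decrease is then a congruence transform of the positive definite `C_z⁻¹`. -/

section covMatrix

open ProbabilityTheory

variable {Ω : Type*} [MeasurableSpace Ω] {μ : Measure Ω} {M N I : ℕ}

theorem covMatrix_apply (x : Ω → Fin M → ℝ) (z : Ω → Fin I → ℝ) (m : Fin M) (i : Fin I) :
    covMatrix μ x z m i = cov[fun ω => x ω m, fun ω => z ω i; μ] :=
  rfl

theorem covMatrix_transpose (x : Ω → Fin M → ℝ) (z : Ω → Fin I → ℝ) :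
    (covMatrix μ x z)ᵀ = covMatrix μ z x := by
  ext i m
  exact covariance_comm _ _

theorem memLp_mulVec {p : ENNReal} {x : Ω → Fin M → ℝ} (hx : ∀ m, MemLp (fun ω => x ω m) p μ)
    (A : Matrix (Fin N) (Fin M) ℝ) (n : Fin N) : MemLp (fun ω => (A *ᵥ x ω) n) p μ :=
  memLp_finsetSum Finset.univ fun m _ => (hx m).const_mul (A n m)

variable {x y : Ω → Fin M → ℝ} {z : Ω → Fin I → ℝ}

theorem covMatrix_mulVec_left [IsFiniteMeasure μ] (hx : ∀ m, MemLp (fun ω => x ω m) 2 μ)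
    (hz : ∀ i, MemLp (fun ω => z ω i) 2 μ) (A : Matrix (Fin N) (Fin M) ℝ) :
    covMatrix μ (fun ω => A *ᵥ x ω) z = A * covMatrix μ x z := by
  ext n i
  simp only [covMatrix_apply, mulVec, dotProduct, mul_apply]
  rw [covariance_fun_sum_left (fun m => (hx m).const_mul (A n m)) (hz i)]
  simp only [covariance_const_mul_left]

theorem covMatrix_mulVec_right [IsFiniteMeasure μ] (hx : ∀ m, MemLp (fun ω => x ω m) 2 μ)
    (hz : ∀ i, MemLp (fun ω => z ω i) 2 μ) (B : Matrix (Fin N) (Fin I) ℝ) :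
    covMatrix μ x (fun ω => B *ᵥ z ω) = covMatrix μ x z * Bᵀ := by
  rw [← covMatrix_transpose, covMatrix_mulVec_left hz hx, transpose_mul, covMatrix_transpose]

theorem covMatrix_sub_left [IsFiniteMeasure μ] (hx : ∀ m, MemLp (fun ω => x ω m) 2 μ)
    (hy : ∀ m, MemLp (fun ω => y ω m) 2 μ) (hz : ∀ i, MemLp (fun ω => z ω i) 2 μ) :
    covMatrix μ (fun ω => x ω - y ω) z = covMatrix μ x z - covMatrix μ y z := by
  ext m i
  exact covariance_fun_sub_left (hx m) (hy m) (hz i)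

theorem covMatrix_sub_right [IsFiniteMeasure μ] (hz : ∀ i, MemLp (fun ω => z ω i) 2 μ)
    (hx : ∀ m, MemLp (fun ω => x ω m) 2 μ) (hy : ∀ m, MemLp (fun ω => y ω m) 2 μ) :
    covMatrix μ z (fun ω => x ω - y ω) = covMatrix μ z x - covMatrix μ z y := by
  ext i m
  exact covariance_fun_sub_right (hz i) (hx m) (hy m)

theorem covMatrix_add_const_left [IsProbabilityMeasure μ]
    (hx : ∀ m, Integrable (fun ω => x ω m) μ) (c : Fin M → ℝ) :
    covMatrix μ (fun ω => x ω + c) z = covMatrix μ x z := by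
  ext m i
  exact covariance_add_const_left (hx m) (c m)

theorem covMatrix_add_const_right [IsProbabilityMeasure μ]
    (hx : ∀ m, Integrable (fun ω => x ω m) μ) (c : Fin M → ℝ) :
    covMatrix μ z (fun ω => x ω + c) = covMatrix μ z x := by
  ext i m
  exact covariance_add_const_right (hx m) (c m)

theorem covMatrix_sub_mulVec_self [IsFiniteMeasure μ] (hx : ∀ m, MemLp (fun ω => x ω m) 2 μ)
    (hz : ∀ i, MemLp (fun ω => z ω i) 2 μ) (A : Matrix (Fin M) (Fin I) ℝ) :
    covMatrix μ (fun ω => x ω - A *ᵥ z ω) (fun ω => x ω - A *ᵥ z ω) =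
      covMatrix μ x x - covMatrix μ x z * Aᵀ - A * (covMatrix μ x z)ᵀ +
        A * covMatrix μ z z * Aᵀ := by
  have hAz := memLp_mulVec hz A
  have hxAz : ∀ m, MemLp (fun ω => (x ω - A *ᵥ z ω) m) 2 μ := fun m => (hx m).sub (hAz m)
  rw [covMatrix_sub_left hx hAz hxAz, covMatrix_sub_right hx hx hAz,
    covMatrix_sub_right hAz hx hAz, covMatrix_mulVec_right hx hz, covMatrix_mulVec_left hz hx,
    covMatrix_mulVec_left hz hAz, covMatrix_mulVec_right hz hz, covMatrix_transpose,
    Matrix.mul_assoc]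
  abel

theorem covMatrix_sub_gain_mulVec_self [IsFiniteMeasure μ]
    (hx : ∀ m, MemLp (fun ω => x ω m) 2 μ) (hz : ∀ i, MemLp (fun ω => z ω i) 2 μ)
    (hCz : IsUnit (covMatrix μ z z).det) {K : Matrix (Fin M) (Fin I) ℝ}
    (hK : K = covMatrix μ x z * (covMatrix μ z z)⁻¹) :
    covMatrix μ (fun ω => x ω - K *ᵥ z ω) (fun ω => x ω - K *ᵥ z ω) =
      covMatrix μ x x - covMatrix μ x z * (covMatrix μ z z)⁻¹ * (covMatrix μ x z)ᵀ := by
  have hKt : Kᵀ = (covMatrix μ z z)⁻¹ * (covMatrix μ x z)ᵀ := by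
    rw [hK, transpose_mul, transpose_nonsing_inv, covMatrix_transpose]
  rw [covMatrix_sub_mulVec_self hx hz, hKt, hK, nonsing_inv_mul_cancel_right _ _ hCz,
    ← Matrix.mul_assoc]
  abel

end covMatrix

/-- The posterior covariance decreases in the Loewner ordering:
`C_{x_f} − C_{x_a} = C_{x_f z} C_z⁻¹ C_{x_f z}ᵀ` is positive semidefinite. -/
theorem kalman_covariance_decreases
    {Ω : Type*} [MeasurableSpace Ω] (ℙ : Measure Ω) [IsProbabilityMeasure ℙ]
    {M I : ℕ} (x_f : Ω → Fin M → ℝ) (z : Ω → Fin I → ℝ)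
    (hx : ∀ m, MemLp (fun ω => x_f ω m) 2 ℙ) (hz : ∀ i, MemLp (fun ω => z ω i) 2 ℙ)
    (hCz : (covMatrix ℙ z z).PosDef)
    (yhat : Fin I → ℝ)
    (K : Matrix (Fin M) (Fin I) ℝ) (hK : K = covMatrix ℙ x_f z * (covMatrix ℙ z z)⁻¹)
    (x_a : Ω → Fin M → ℝ) (hxa : x_a = fun ω => x_f ω + K.mulVec (yhat - z ω)) :
    covMatrix ℙ x_f x_f - covMatrix ℙ x_a x_a =
        covMatrix ℙ x_f z * (covMatrix ℙ z z)⁻¹ * (covMatrix ℙ x_f z)ᵀ ∧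
      (covMatrix ℙ x_f x_f - covMatrix ℙ x_a x_a).PosSemidef := by
  have hxa' : x_a = fun ω => (x_f ω - K *ᵥ z ω) + K *ᵥ yhat := by
    rw [hxa]; funext ω; rw [mulVec_sub]; abel
  have hv : ∀ m, Integrable (fun ω => (x_f ω - K *ᵥ z ω) m) ℙ := fun m =>
    ((hx m).sub (memLp_mulVec hz K m)).integrable one_le_two
  have hdecrease : covMatrix ℙ x_f x_f - covMatrix ℙ x_a x_a =
      covMatrix ℙ x_f z * (covMatrix ℙ z z)⁻¹ * (covMatrix ℙ x_f z)ᵀ := by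
    have hdet : IsUnit (covMatrix ℙ z z).det := (isUnit_iff_isUnit_det _).mp hCz.isUnit
    rw [hxa', covMatrix_add_const_left hv, covMatrix_add_const_right hv,
      covMatrix_sub_gain_mulVec_self hx hz hdet hK, sub_sub_cancel]
  refine ⟨hdecrease, hdecrease ▸ ?_⟩
  simpa only [conjTranspose_eq_transpose_of_trivial] using
    hCz.inv.posSemidef.mul_mul_conjTranspose_same (covMatrix ℙ x_f z)
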